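/- For rationally independent reals ω₁, …, ω_k and nonnegative integers l₁, …, l_k, the asymptotic mean value M(∏_{j=1}^k cos(ω_j t)^{l_j}) equals ∏_{j=1}^k 2^{-l_j} · C(l_j, l_j/2) if every l_j is even, and equals 0 otherwise. -/
import Mathlib


open MeasureTheory Filter

/-- The asymptotic mean value of a real-valued function on `ℝ`. -/
def HasMeanValue (f : ℝ → ℝ) (A : ℝ) : Prop :=
  Tendsto (fun T : ℝ => (1 / (2 * T)) * ∫ t in (-T)..T, f t) atTop (nhds A)

lemma hasMeanValue_cos (α : ℝ) :
    HasMeanValue (fun t => Real.cos (α * t)) (if α = 0 then 1 else 0) := by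
  unfold HasMeanValue
  by_cases hα : α = 0
  · simp only [hα, if_pos rfl, zero_mul, Real.cos_zero]
    have : ∀ᶠ T : ℝ in atTop, (1 / (2 * T)) * ∫ t in (-T)..T, (1:ℝ) = 1 := by
      filter_upwards [eventually_gt_atTop (0:ℝ)] with T hT
      rw [intervalIntegral.integral_const]
      rw [smul_eq_mul]
      field_simp
      ring
    exact Tendsto.congr' (this.mono fun T h => h.symm) tendsto_const_nhds
  · rw [if_neg hα]
    have hint : ∀ T : ℝ, (∫ t in (-T)..T, Real.cos (α * t)) =
        (Real.sin (α * T) - Real.sin (α * (-T))) / α := by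
      intro T
      rw [intervalIntegral.integral_comp_mul_left Real.cos hα, integral_cos]
      rw [smul_eq_mul]
      ring
    apply squeeze_zero_norm' (a := fun T => 1 / (|α| * T))
    · filter_upwards [eventually_gt_atTop (0:ℝ)] with T hT
      rw [hint]
      have h1 : |Real.sin (α * T) - Real.sin (α * (-T))| ≤ 2 := by
        have := Real.abs_sin_le_one (α * T)
        have := Real.abs_sin_le_one (α * (-T))
        calc |Real.sin (α * T) - Real.sin (α * (-T))| ≤ |Real.sin (α * T)| + |Real.sin (α * (-T))| := abs_sub _ _
          _ ≤ 2 := by linarith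
      rw [Real.norm_eq_abs, abs_mul, abs_div, abs_div, abs_one, abs_of_pos (by positivity : (0:ℝ) < 2*T)]
      rw [div_mul_div_comm, one_mul, div_le_div_iff₀ (by positivity) (by positivity)]
      have hαpos : 0 < |α| := abs_pos.2 hα
      nlinarith [mul_le_mul_of_nonneg_right h1 (le_of_lt (mul_pos hαpos hT))]
    · have : Tendsto (fun T : ℝ => |α| * T) atTop atTop :=
        Tendsto.const_mul_atTop (abs_pos.2 hα) tendsto_id
      apply this.inv_tendsto_atTop.congr
      intro T
      simp [one_div, mul_inv, mul_comm]

lemma hasMeanValue_sum_cos {ι : Type*} [Fintype ι] (c : ι → ℝ) (α : ι → ℝ) :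
    HasMeanValue (fun t => ∑ i, c i * Real.cos (α i * t))
      (∑ i, c i * if α i = 0 then 1 else 0) := by
  unfold HasMeanValue
  have hcong : ∀ T : ℝ, (1 / (2 * T)) * ∫ t in (-T)..T, ∑ i, c i * Real.cos (α i * t)
      = ∑ i, c i * ((1 / (2 * T)) * ∫ t in (-T)..T, Real.cos (α i * t)) := by
    intro T
    rw [intervalIntegral.integral_finset_sum]
    · rw [Finset.mul_sum]
      congr 1
      funext i
      rw [intervalIntegral.integral_const_mul]
      ring
    · intro i _
      exact (Continuous.intervalIntegrable (by continuity) _ _)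
  simp only [hcong]
  exact tendsto_finset_sum _ fun i _ =>
    (hasMeanValue_cos (α i)).const_mul (c i)

lemma cos_pow_eq_sum (x : ℝ) (l : ℕ) :
    ((Real.cos x : ℂ)) ^ l
      = ∑ m : Fin (l + 1), (((l.choose m : ℝ) / 2 ^ l : ℝ) : ℂ) *
          Complex.exp ((((2 * (m : ℕ) - (l : ℝ)) * x : ℝ)) * Complex.I) := by
  rw [Complex.ofReal_cos, Complex.cos]
  rw [div_pow, add_pow]
  rw [Finset.sum_div, ← Fin.sum_univ_eq_sum_range
    (fun i => Complex.exp (↑x * Complex.I) ^ i * Complex.exp (-↑x * Complex.I) ^ (l - i)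
      * ((l.choose i : ℂ)) / 2 ^ l)]
  apply Finset.sum_congr rfl
  intro m _
  have hml : (m : ℕ) ≤ l := Nat.lt_succ_iff.mp m.isLt
  have e1 : Complex.exp (↑x * Complex.I) ^ (m : ℕ) = Complex.exp (((m : ℕ) : ℂ) * (↑x * Complex.I)) :=
    (Complex.exp_nat_mul _ (m : ℕ)).symm
  have e2 : Complex.exp (-↑x * Complex.I) ^ (l - (m : ℕ))
      = Complex.exp (((l - (m : ℕ) : ℕ) : ℂ) * (-↑x * Complex.I)) :=
    (Complex.exp_nat_mul _ (l - (m : ℕ))).symm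
  rw [e1, e2, ← Complex.exp_add]
  have harg : ((m : ℕ) : ℂ) * (↑x * Complex.I) + ((l - (m : ℕ) : ℕ) : ℂ) * (-↑x * Complex.I)
      = (((2 * (m : ℕ) - (l : ℝ)) * x : ℝ) : ℂ) * Complex.I := by
    have : ((l - (m : ℕ) : ℕ) : ℂ) = (l : ℂ) - (m : ℕ) := by
      push_cast [hml]
      ring
    rw [this]
    push_cast
    ring
  rw [harg]
  push_cast
  ring

lemma prod_cos_pow_eq (k : ℕ) (ω : Fin k → ℝ) (l : Fin k → ℕ) (t : ℝ) :
    ∏ j : Fin k, Real.cos (ω j * t) ^ l j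
      = ∑ m : (∀ j : Fin k, Fin (l j + 1)),
          (∏ j : Fin k, ((l j).choose (m j) : ℝ) / 2 ^ l j) *
            Real.cos ((∑ j : Fin k, (2 * ((m j : ℕ) : ℝ) - l j) * ω j) * t) := by
  have hC : ((∏ j : Fin k, Real.cos (ω j * t) ^ l j : ℝ) : ℂ)
      = ∑ m : (∀ j : Fin k, Fin (l j + 1)),
          ((∏ j : Fin k, ((l j).choose (m j) : ℝ) / 2 ^ l j : ℝ) : ℂ) *
            Complex.exp ((((∑ j : Fin k, (2 * ((m j : ℕ) : ℝ) - l j) * ω j) * t : ℝ)) * Complex.I) := by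
    rw [Complex.ofReal_prod]
    have step1 : ∀ j : Fin k, ((Real.cos (ω j * t) ^ l j : ℝ) : ℂ)
        = ∑ m : Fin (l j + 1), (((l j).choose m : ℝ) / 2 ^ l j : ℝ) *
            Complex.exp ((((2 * (m : ℕ) - (l j : ℝ)) * (ω j * t) : ℝ)) * Complex.I) := by
      intro j
      rw [Complex.ofReal_pow]
      exact cos_pow_eq_sum (ω j * t) (l j)
    rw [Finset.prod_congr rfl fun j _ => step1 j]
    rw [Fintype.prod_sum]
    apply Finset.sum_congr rfl
    intro m _
    rw [Finset.prod_mul_distrib, ← Complex.exp_sum, Complex.ofReal_prod]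
    congr 1
    push_cast
    rw [Finset.sum_mul, Finset.sum_mul]
    congr 1
    exact Finset.sum_congr rfl fun j _ => by ring
  have := congrArg Complex.re hC
  rw [Complex.ofReal_re, Complex.re_sum] at this
  rw [this]
  apply Finset.sum_congr rfl
  intro m _
  rw [Complex.re_ofReal_mul, Complex.exp_ofReal_mul_I_re]

/-- For rationally independent reals `ω₁, …, ω_k` and nonnegative integers `l₁, …, l_k`,
the asymptotic mean value of `∏_j cos(ω_j t)^{l_j}` equals
`∏_j 2^{-l_j} C(l_j, l_j/2)` if every `l_j` is even, and `0` otherwise. -/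
theorem meanValue_prod_cos_pow
    (k : ℕ) (ω : Fin k → ℝ) (hind : LinearIndependent ℚ ω) (l : Fin k → ℕ) :
    HasMeanValue (fun t => ∏ j : Fin k, Real.cos (ω j * t) ^ l j)
      (if ∀ j : Fin k, Even (l j)
        then ∏ j : Fin k, (1 / 2 ^ l j : ℝ) * ((l j).choose (l j / 2) : ℝ)
        else 0) := by
  classical
  set c : (∀ j : Fin k, Fin (l j + 1)) → ℝ :=
    fun m => ∏ j : Fin k, ((l j).choose (m j) : ℝ) / 2 ^ l j with hc
  set α : (∀ j : Fin k, Fin (l j + 1)) → ℝ :=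
    fun m => ∑ j : Fin k, (2 * ((m j : ℕ) : ℝ) - l j) * ω j with hα
  have hfun : (fun t => ∏ j : Fin k, Real.cos (ω j * t) ^ l j)
      = fun t => ∑ m, c m * Real.cos (α m * t) := by
    funext t
    exact prod_cos_pow_eq k ω l t
  have hzero : ∀ m : (∀ j : Fin k, Fin (l j + 1)),
      α m = 0 ↔ ∀ j : Fin k, 2 * (m j : ℕ) = l j := by
    intro m
    constructor
    · intro h
      have key := Fintype.linearIndependent_iff.mp hind
        (fun j => (2 * ((m j : ℕ) : ℚ) - l j))
      have hsum : ∑ j : Fin k, (2 * ((m j : ℕ) : ℚ) - l j) • ω j = 0 := by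
        rw [← h, hα]
        apply Finset.sum_congr rfl
        intro j _
        rw [Rat.smul_def]
        push_cast
        ring
      intro j
      have := key hsum j
      have h2 : (2 * ((m j : ℕ) : ℚ)) = (l j : ℚ) := by linarith [this]
      exact_mod_cast h2
    · intro h
      apply Finset.sum_eq_zero
      intro j _
      have : (2 * ((m j : ℕ) : ℝ) - l j) = 0 := by
        have := h j
        push_cast [← this]
        ring
      rw [this, zero_mul]
  rw [hfun]
  have hmean := hasMeanValue_sum_cos c α
  convert hmean using 2
  by_cases hall : ∀ j : Fin k, Even (l j)
  · rw [if_pos hall]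
    set m₀ : ∀ j : Fin k, Fin (l j + 1) := fun j => ⟨l j / 2, by omega⟩ with hm₀
    have hiff : ∀ m, α m = 0 ↔ m = m₀ := by
      intro m
      rw [hzero m]
      constructor
      · intro h
        funext j
        apply Fin.ext
        have := h j
        simp only [hm₀]
        omega
      · intro h j
        subst h
        obtain ⟨r, hr⟩ := hall j
        simp only [hm₀]
        omega
    have : ∀ m, c m * (if α m = 0 then (1:ℝ) else 0)
        = if m = m₀ then c m else 0 := by
      intro m
      rw [if_congr (hiff m) rfl rfl]
      split <;> simp
    rw [Finset.sum_congr rfl fun m _ => this m, Finset.sum_ite_eq' Finset.univ m₀ c,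
      if_pos (Finset.mem_univ _)]
    rw [hc]
    apply Finset.prod_congr rfl
    intro j _
    simp only [hm₀]
    ring
  · rw [if_neg hall]
    symm
    apply Finset.sum_eq_zero
    intro m _
    rw [if_neg, mul_zero]
    intro h
    apply hall
    intro j
    exact ⟨(m j : ℕ), by have := (hzero m).mp h j; omega⟩
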